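/- Let G be a connected graph with V(G) = {1,...,n}, n ≥ 2, and consider the corona product G ⊙ K_1, where v^{(i)} denotes the pendant vertex attached to vertex i. Then the family {{1, v^{(1)}}, {2, v^{(2)}}, ..., {n, v^{(n)}}} is a pairing resolving set of G ⊙ K_1; that is, every set {x_1,...,x_n} with x_i ∈ {i, v^{(i)}} is a resolving set of G ⊙ K_1. -/

import Mathlib

open SimpleGraph

/-- Path graph on `Fin n` with `i` adjacent to `i+1`. -/
def pathG (n : ℕ) : SimpleGraph (Fin n) :=
  SimpleGraph.fromRel (fun i j => (i : ℕ) + 1 = (j : ℕ))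

/-- Cycle graph on `Fin n` (vertices in cyclic order). -/
def cycleG (n : ℕ) : SimpleGraph (Fin n) :=
  SimpleGraph.fromRel (fun i j => (i : ℕ) + 1 = (j : ℕ) ∨ ((i : ℕ) = n - 1 ∧ (j : ℕ) = 0))

/-- `S` is a resolving set of `G`. -/
def resolvingSet {V : Type*} (G : SimpleGraph V) (S : Set V) : Prop :=
  ∀ x y : V, x ≠ y → ∃ z ∈ S, G.dist x z ≠ G.dist y z

/-- `S` is a locating set of `G`. -/
def locatingSet {V : Type*} (G : SimpleGraph V) (S : Set V) : Prop :=
  ∀ u v : V, u ∉ S → v ∉ S → u ≠ v → G.neighborSet u ∩ S ≠ G.neighborSet v ∩ S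

/-- `S` is a strictly locating set of `G`. -/
def strictlyLocatingSet {V : Type*} (G : SimpleGraph V) (S : Set V) : Prop :=
  locatingSet G S ∧ ∀ u : V, u ∉ S → G.neighborSet u ∩ S ≠ S

/-- Corona product `G ⊙ H`: vertex `Sum.inl a` is a vertex of `G`, and
`Sum.inr (i, h)` is the vertex `h` of the `i`-th copy of `H`. -/
def corona {α β : Type*} (G : SimpleGraph α) (H : SimpleGraph β) :
    SimpleGraph (α ⊕ α × β) :=
  SimpleGraph.fromRel (fun x y =>
    match x, y with
    | Sum.inl a, Sum.inl b => G.Adj a b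
    | Sum.inl a, Sum.inr p => a = p.1
    | Sum.inr p, Sum.inr q => p.1 = q.1 ∧ H.Adj p.2 q.2
    | _, _ => False)

/-- `K₁ ⊙ H`: the graph `H` together with one universal vertex `none`. -/
def cone {β : Type*} (H : SimpleGraph β) : SimpleGraph (Option β) :=
  SimpleGraph.fromRel (fun x y =>
    match x, y with
    | some a, some b => H.Adj a b
    | none, some _ => True
    | _, _ => False)

section CoronaAux

variable {α : Type*} {G : SimpleGraph α}

lemma corona_adj {x y : α ⊕ α × Fin 1} (h : (corona G (⊥ : SimpleGraph (Fin 1))).Adj x y) :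
    (∃ a b, G.Adj a b ∧ x = Sum.inl a ∧ y = Sum.inl b) ∨
    (∃ a i, x = Sum.inl a ∧ y = Sum.inr (a, i)) ∨
    (∃ a i, x = Sum.inr (a, i) ∧ y = Sum.inl a) := by
  rw [corona, SimpleGraph.fromRel_adj] at h
  cases x with
  | inl a => cases y with
    | inl b =>
      simp only [ne_eq] at h
      left
      refine ⟨a, b, ?_, rfl, rfl⟩
      rcases h.2 with h' | h'
      · exact h'
      · exact h'.symm
    | inr p =>
      simp only [ne_eq] at h
      right; left
      refine ⟨p.1, p.2, ?_, rfl⟩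
      rcases h.2 with h' | h'
      · rw [h']
      · exact h'.elim
  | inr p => cases y with
    | inl b =>
      simp only [ne_eq] at h
      right; right
      refine ⟨p.1, p.2, rfl, ?_⟩
      rcases h.2 with h' | h'
      · exact h'.elim
      · rw [h']
    | inr q =>
      exfalso
      rcases h.2 with h' | h'
      · exact h'.2.elim
      · exact h'.2.elim

open scoped Classical in
/-- Explicit distance function on the corona `G ⊙ K₁`. -/
noncomputable def coronaD (G : SimpleGraph α) : (α ⊕ α × Fin 1) → (α ⊕ α × Fin 1) → ℕ
  | Sum.inl a, Sum.inl b => G.dist a b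
  | Sum.inl a, Sum.inr p => G.dist a p.1 + 1
  | Sum.inr p, Sum.inl b => G.dist p.1 b + 1
  | Sum.inr p, Sum.inr q => if p.1 = q.1 then 0 else G.dist p.1 q.1 + 2

lemma adj_dist_le (hG : G.Connected) {a b c : α} (hab : G.Adj a b) :
    G.dist a c ≤ G.dist b c + 1 := by
  have h1 : G.dist a b ≤ 1 := by
    have := SimpleGraph.dist_le (SimpleGraph.Walk.cons hab SimpleGraph.Walk.nil)
    simpa using this
  have := hG.dist_triangle (u := a) (v := b) (w := c)
  omega

lemma coronaD_step (hG : G.Connected) {x z : α ⊕ α × Fin 1}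
    (h : (corona G (⊥ : SimpleGraph (Fin 1))).Adj x z) (y : α ⊕ α × Fin 1) :
    coronaD G x y ≤ coronaD G z y + 1 := by
  rcases corona_adj h with ⟨a, b, hab, rfl, rfl⟩ | ⟨a, i, rfl, rfl⟩ | ⟨a, i, rfl, rfl⟩
  · cases y with
    | inl c => exact adj_dist_le hG hab
    | inr q =>
      simp only [coronaD]
      have := adj_dist_le hG hab (c := q.1)
      omega
  · cases y with
    | inl c =>
      simp only [coronaD]
      omega
    | inr q =>
      simp only [coronaD]
      by_cases hq : a = q.1
      · subst hq
        simp [SimpleGraph.dist_self]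
      · rw [if_neg hq]
        omega
  · cases y with
    | inl c =>
      simp only [coronaD]
      omega
    | inr q =>
      simp only [coronaD]
      by_cases hq : a = q.1
      · simp [hq]
      · rw [if_neg hq]

lemma coronaD_le_length (hG : G.Connected) {x y : α ⊕ α × Fin 1}
    (w : (corona G (⊥ : SimpleGraph (Fin 1))).Walk x y) :
    coronaD G x y ≤ w.length := by
  induction w with
  | nil =>
    rename_i u
    cases u with
    | inl a => simp [coronaD, SimpleGraph.dist_self]
    | inr p => simp [coronaD]
  | cons h w ih =>
    calc coronaD G _ _ ≤ coronaD G _ _ + 1 := coronaD_step hG h _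
    _ ≤ w.length + 1 := by omega
    _ = _ := by simp

/-- Embedding of `G` into the corona. -/
def coronaHom (G : SimpleGraph α) : G →g corona G (⊥ : SimpleGraph (Fin 1)) where
  toFun := Sum.inl
  map_rel' := by
    intro a b hab
    rw [corona, SimpleGraph.fromRel_adj]
    exact ⟨by simp [hab.ne], Or.inl hab⟩

lemma corona_pendant_adj (a : α) (i : Fin 1) :
    (corona G (⊥ : SimpleGraph (Fin 1))).Adj (Sum.inl a) (Sum.inr (a, i)) := by
  rw [corona, SimpleGraph.fromRel_adj]
  exact ⟨by simp, Or.inl rfl⟩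

lemma corona_connected (hG : G.Connected) :
    (corona G (⊥ : SimpleGraph (Fin 1))).Connected := by
  have hne : Nonempty α := hG.nonempty
  have hne2 : Nonempty (α ⊕ α × Fin 1) := ⟨Sum.inl (Classical.arbitrary α)⟩
  constructor
  intro x y
  have key : ∀ z : α ⊕ α × Fin 1, ∃ a : α,
      (corona G (⊥ : SimpleGraph (Fin 1))).Reachable z (Sum.inl a) := by
    intro z
    cases z with
    | inl a => exact ⟨a, SimpleGraph.Reachable.refl _⟩
    | inr p => exact ⟨p.1, (corona_pendant_adj p.1 p.2).symm.reachable⟩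
  obtain ⟨a, ha⟩ := key x
  obtain ⟨b, hb⟩ := key y
  have hab : (corona G (⊥ : SimpleGraph (Fin 1))).Reachable (Sum.inl a) (Sum.inl b) := by
    obtain ⟨p⟩ := hG.preconnected a b
    exact ⟨p.map (coronaHom G)⟩
  exact (ha.trans hab).trans hb.symm

lemma corona_dist_eq (hG : G.Connected) (x y : α ⊕ α × Fin 1) :
    (corona G (⊥ : SimpleGraph (Fin 1))).dist x y = coronaD G x y := by
  have hc := corona_connected hG
  apply le_antisymm
  · -- construct a walk of length `coronaD G x y`
    obtain ⟨p, hp⟩ := hG.exists_walk_length_eq_dist (Sum.elim id Prod.fst x) (Sum.elim id Prod.fst y)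
    cases x with
    | inl a => cases y with
      | inl b =>
        have := SimpleGraph.dist_le (p.map (coronaHom G))
        rw [SimpleGraph.Walk.length_map, hp] at this
        exact this
      | inr q =>
        have := SimpleGraph.dist_le
          ((p.map (coronaHom G)).concat (corona_pendant_adj q.1 q.2))
        rw [SimpleGraph.Walk.length_concat (p.map (coronaHom G)) (corona_pendant_adj q.1 q.2),
          SimpleGraph.Walk.length_map, hp] at this
        exact this
    | inr pp => cases y with
      | inl b =>
        have := SimpleGraph.dist_le
          (SimpleGraph.Walk.cons (corona_pendant_adj pp.1 pp.2).symm (p.map (coronaHom G)))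
        have hl : (SimpleGraph.Walk.cons (corona_pendant_adj pp.1 pp.2).symm
            (p.map (coronaHom G))).length = p.length + 1 :=
          congrArg (· + 1) (SimpleGraph.Walk.length_map _ _)
        rw [hl, hp] at this
        exact this
      | inr q =>
        by_cases hq : pp.1 = q.1
        · have hpq : pp = q := by
            obtain ⟨p1, p2⟩ := pp; obtain ⟨q1, q2⟩ := q
            simp at hq
            simp [hq, Subsingleton.elim p2 q2]
          subst hpq
          simp [coronaD, SimpleGraph.dist_self]
        · have := SimpleGraph.dist_le
            ((SimpleGraph.Walk.cons (corona_pendant_adj pp.1 pp.2).symm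
              (p.map (coronaHom G))).concat (corona_pendant_adj q.1 q.2))
          simp only [coronaD, if_neg hq]
          have hl : ((SimpleGraph.Walk.cons (corona_pendant_adj pp.1 pp.2).symm
              (p.map (coronaHom G))).concat (corona_pendant_adj q.1 q.2)).length = p.length + 1 + 1 :=
            (SimpleGraph.Walk.length_concat _ _).trans
              (congrArg (· + 1) (congrArg (· + 1) (SimpleGraph.Walk.length_map _ _)))
          rw [hl, hp] at this
          exact this
  · obtain ⟨w, hw⟩ := hc.exists_walk_length_eq_dist x y
    rw [← hw]
    exact coronaD_le_length hG w

lemma two_cand (hG : G.Connected) {a b : α} (hab : a ≠ b)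
    {x y za zb : α ⊕ α × Fin 1}
    (hx : x = Sum.inl a ∨ x = Sum.inr (a, 0))
    (hy : y = Sum.inl b ∨ y = Sum.inr (b, 0))
    (hza : za = Sum.inl a ∨ za = Sum.inr (a, 0))
    (hzb : zb = Sum.inl b ∨ zb = Sum.inr (b, 0)) :
    (corona G (⊥ : SimpleGraph (Fin 1))).dist x za ≠
      (corona G (⊥ : SimpleGraph (Fin 1))).dist y za ∨
    (corona G (⊥ : SimpleGraph (Fin 1))).dist x zb ≠
      (corona G (⊥ : SimpleGraph (Fin 1))).dist y zb := by
  have hd : 0 < G.dist a b := hG.pos_dist_of_ne hab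
  have hd' : 0 < G.dist b a := hG.pos_dist_of_ne hab.symm
  rcases hx with rfl | rfl <;> rcases hy with rfl | rfl <;>
    rcases hza with rfl | rfl <;> rcases hzb with rfl | rfl <;>
    simp [corona_dist_eq hG, coronaD, SimpleGraph.dist_self,
      if_neg hab, if_neg hab.symm] <;>
    first
      | omega
      | exact Or.inr ⟨hab, hG.preconnected a b⟩

end CoronaAux

theorem stmt8 {α : Type*} [Fintype α] (G : SimpleGraph α) (hG : G.Connected)
    (hcard : 2 ≤ Fintype.card α)
    (f : α → α ⊕ α × Fin 1)
    (hf : ∀ i : α, f i = Sum.inl i ∨ f i = Sum.inr (i, 0)) :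
    resolvingSet (corona G (⊥ : SimpleGraph (Fin 1))) (Set.range f) := by
  intro x y hxy
  have hform : ∀ z : α ⊕ α × Fin 1, ∃ c : α, z = Sum.inl c ∨ z = Sum.inr (c, 0) := by
    intro z
    cases z with
    | inl c => exact ⟨c, Or.inl rfl⟩
    | inr p => exact ⟨p.1, Or.inr (by rw [Subsingleton.elim (0 : Fin 1) p.2])⟩
  obtain ⟨a, hx⟩ := hform x
  obtain ⟨b, hy⟩ := hform y
  by_cases hab : a = b
  · subst hab
    obtain ⟨c, hc⟩ := Fintype.exists_ne_of_one_lt_card (by omega) a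
    refine ⟨f c, Set.mem_range_self c, ?_⟩
    have hac : a ≠ c := hc.symm
    rcases hx with rfl | rfl <;> rcases hy with rfl | rfl <;>
      first
        | exact absurd rfl hxy
        | rcases hf c with h | h <;> rw [h] <;>
            simp [corona_dist_eq hG, coronaD, if_neg hac]
  · rcases two_cand hG hab hx hy (hf a) (hf b) with h | h
    · exact ⟨f a, Set.mem_range_self a, h⟩
    · exact ⟨f b, Set.mem_range_self b, h⟩
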